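/- (Min-entropy leakage chain rule, cq version, unsmoothed.) Let ρ_XBC be a state classical on X with dim(H_C) = 2^ℓ, and define the guessing-probability min-entropy H_min(X|·) = −log of the optimal guessing probability over all POVMs. Then H_min(X|BC)_ρ ≥ H_min(X|B)_ρ − 2ℓ. -/

import Mathlib

/-!
Split a vector `v` on `B × C` into its `|C|` slices `v = ∑ c, v_c`. For `M ⪰ 0`, Cauchy–Schwarz
gives `⟪v, M v⟫ ≤ |C| ∑ c, ⟪v_c, M v_c⟫ ≤ |C| ⟪v, (Tr_C M ⊗ 1) v⟫`, i.e.
`ρ_BC ≤ |C|² (ρ_B ⊗ ω_C)` with `ω_C` maximally mixed. Hence for a POVM `F` on `BC` the POVM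
`G x = Tr_C (F x) / |C|` on `B` has success probability at least `|C|⁻²` times that of `F`,
so `P_guess(X|BC) ≤ 2^{2ℓ} P_guess(X|B)`; now take `-log₂`.
-/

open Matrix ComplexOrder
open scoped MatrixOrder Kronecker

namespace Matrix

variable {𝕜 m n : Type*} [RCLike 𝕜] [Fintype n]

lemma star_sum_dotProduct_sum_le {ι : Type*} [Fintype ι] (u : ι → n → 𝕜) :
    star (∑ i, u i) ⬝ᵥ ∑ i, u i ≤ Fintype.card ι * ∑ i, star (u i) ⬝ᵥ u i := by
  have cauchy_schwarz (z : ι → 𝕜) :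
      star (∑ i, z i) * ∑ i, z i ≤ Fintype.card ι * ∑ i, star (z i) * z i := by
    simp only [RCLike.star_def, RCLike.conj_mul]
    exact_mod_cast (pow_le_pow_left₀ (norm_nonneg _) (norm_sum_le _ _) 2).trans
      (sq_sum_le_card_mul_sum_sq ..)
  simp only [dotProduct, Finset.sum_apply, Pi.star_apply, star_sum]
  rw [Finset.sum_comm, Finset.mul_sum]
  exact Finset.sum_le_sum fun j _ => by simpa only [star_sum] using cauchy_schwarz (u · j)

lemma PosSemidef.dotProduct_mulVec_sum_le {M : Matrix n n 𝕜} (hM : M.PosSemidef)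
    {ι : Type*} [Fintype ι] (w : ι → n → 𝕜) :
    star (∑ i, w i) ⬝ᵥ (M *ᵥ ∑ i, w i) ≤ Fintype.card ι * ∑ i, star (w i) ⬝ᵥ (M *ᵥ w i) := by
  classical
  obtain ⟨B, rfl⟩ := CStarAlgebra.nonneg_iff_eq_star_mul_self.mp hM.nonneg
  have hq (v : n → 𝕜) : star v ⬝ᵥ ((star B * B) *ᵥ v) = star (B *ᵥ v) ⬝ᵥ (B *ᵥ v) := by
    rw [← mulVec_mulVec, star_eq_conjTranspose, dotProduct_mulVec, ← star_mulVec]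
  rw [hq, mulVec_sum]
  simp only [hq]
  exact star_sum_dotProduct_sum_le _

lemma PosSemidef.trace_mul_nonneg {A M : Matrix n n 𝕜} (hA : A.PosSemidef)
    (hM : M.PosSemidef) : 0 ≤ (A * M).trace := by
  classical
  obtain ⟨B, rfl⟩ := CStarAlgebra.nonneg_iff_eq_star_mul_self.mp hA.nonneg
  rw [star_eq_conjTranspose, Matrix.mul_assoc, trace_mul_comm]
  exact (hM.mul_mul_conjTranspose_same B).trace_nonneg

lemma PosSemidef.trace_mul_le_trace_mul_of_le {A M M' : Matrix n n 𝕜} (hA : A.PosSemidef)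
    (h : M ≤ M') : (A * M).trace ≤ (A * M').trace := by
  rw [← sub_nonneg, ← trace_sub, ← Matrix.mul_sub]
  exact hA.trace_mul_nonneg h

lemma PosSemidef.trace_mul_le_trace_of_le_one {A M : Matrix n n 𝕜} [DecidableEq n]
    (hM : M.PosSemidef) (hA : A ≤ 1) : (A * M).trace ≤ M.trace := by
  simpa only [trace_mul_comm M, Matrix.mul_one] using hM.trace_mul_le_trace_mul_of_le hA

def partialTraceRight (M : Matrix (m × n) (m × n) 𝕜) : Matrix m m 𝕜 :=
  of fun i j => ∑ k, M (i, k) (j, k)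

lemma partialTraceRight_eq_sum_submatrix (M : Matrix (m × n) (m × n) 𝕜) :
    M.partialTraceRight = ∑ k, M.submatrix (·, k) (·, k) := by
  ext i j
  simp [partialTraceRight, sum_apply]

lemma PosSemidef.partialTraceRight [Fintype m] {M : Matrix (m × n) (m × n) 𝕜}
    (hM : M.PosSemidef) : M.partialTraceRight.PosSemidef := by
  rw [partialTraceRight_eq_sum_submatrix]
  exact posSemidef_sum _ fun k _ => hM.submatrix _

lemma partialTraceRight_sum {X : Type*} [Fintype X] (F : X → Matrix (m × n) (m × n) 𝕜) :
    (∑ x, F x).partialTraceRight = ∑ x, (F x).partialTraceRight := by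
  ext i j
  simp only [partialTraceRight, of_apply, sum_apply]
  exact Finset.sum_comm

variable [DecidableEq n]

lemma partialTraceRight_one [DecidableEq m] :
    (1 : Matrix (m × n) (m × n) 𝕜).partialTraceRight = (Fintype.card n : 𝕜) • 1 := by
  ext i j
  by_cases h : i = j <;> simp [partialTraceRight, one_apply, h]

lemma trace_mul_kronecker_one [Fintype m] (F : Matrix (m × n) (m × n) 𝕜)
    (σ : Matrix m m 𝕜) :
    (F * (σ ⊗ₖ (1 : Matrix n n 𝕜))).trace = (F.partialTraceRight * σ).trace := by
  simp [trace, mul_apply, partialTraceRight, one_apply, Fintype.sum_prod_type, Finset.sum_mul]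
  exact Finset.sum_congr rfl fun i _ => Finset.sum_comm

def sliceEmbed (k : n) (w : m → 𝕜) : m × n → 𝕜 := fun p => if p.2 = k then w p.1 else 0

lemma sum_sliceEmbed (v : m × n → 𝕜) : ∑ k, sliceEmbed k (v ∘ (·, k)) = v := by
  ext p
  simp [sliceEmbed, Finset.sum_apply]

variable [Fintype m]

lemma dotProduct_mulVec_sliceEmbed (M : Matrix (m × n) (m × n) 𝕜) (k : n) (w : m → 𝕜) :
    star (sliceEmbed k w) ⬝ᵥ (M *ᵥ sliceEmbed k w) =
      star w ⬝ᵥ (M.submatrix (·, k) (·, k) *ᵥ w) := by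
  simp [sliceEmbed, dotProduct, mulVec, Fintype.sum_prod_type, apply_ite, ite_mul]

lemma dotProduct_kronecker_one_mulVec (σ : Matrix m m 𝕜) (v : m × n → 𝕜) :
    star v ⬝ᵥ ((σ ⊗ₖ (1 : Matrix n n 𝕜)) *ᵥ v) =
      ∑ k, star (v ∘ (·, k)) ⬝ᵥ (σ *ᵥ (v ∘ (·, k))) := by
  simp [dotProduct, mulVec, one_apply, Fintype.sum_prod_type, Finset.mul_sum]
  exact Finset.sum_comm

lemma PosSemidef.le_card_smul_partialTraceRight_kronecker_one
    {M : Matrix (m × n) (m × n) 𝕜} (hM : M.PosSemidef) :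
    M ≤ (Fintype.card n : 𝕜) • (M.partialTraceRight ⊗ₖ (1 : Matrix n n 𝕜)) := by
  rw [le_iff]
  refine .of_dotProduct_mulVec_nonneg ?_ fun v => ?_
  · exact ((hM.partialTraceRight.kronecker .one).smul (Nat.cast_nonneg _)).1.sub hM.1
  rw [sub_mulVec, dotProduct_sub, smul_mulVec, dotProduct_smul, smul_eq_mul, sub_nonneg]
  set d : 𝕜 := (Fintype.card n : 𝕜)
  calc star v ⬝ᵥ (M *ᵥ v)
      = star (∑ k, sliceEmbed k (v ∘ (·, k))) ⬝ᵥ (M *ᵥ ∑ k, sliceEmbed k (v ∘ (·, k))) := by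
        rw [sum_sliceEmbed]
    _ ≤ d * ∑ k, star (sliceEmbed k (v ∘ (·, k))) ⬝ᵥ (M *ᵥ sliceEmbed k (v ∘ (·, k))) :=
        hM.dotProduct_mulVec_sum_le _
    _ = d * ∑ k, star (v ∘ (·, k)) ⬝ᵥ (M.submatrix (·, k) (·, k) *ᵥ (v ∘ (·, k))) := by
        simp only [dotProduct_mulVec_sliceEmbed]
    _ ≤ d * ∑ k, ∑ e, star (v ∘ (·, k)) ⬝ᵥ (M.submatrix (·, e) (·, e) *ᵥ (v ∘ (·, k))) := by
        refine mul_le_mul_of_nonneg_left (Finset.sum_le_sum fun k _ => ?_) (Nat.cast_nonneg _)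
        exact Finset.single_le_sum (f := fun e => star (v ∘ (·, k)) ⬝ᵥ
          (M.submatrix (·, e) (·, e) *ᵥ v ∘ (·, k)))
          (fun e _ => (hM.submatrix _).dotProduct_mulVec_nonneg _) (Finset.mem_univ k)
    _ = d * (star v ⬝ᵥ ((M.partialTraceRight ⊗ₖ (1 : Matrix n n 𝕜)) *ᵥ v)) := by
        simp only [dotProduct_kronecker_one_mulVec, partialTraceRight_eq_sum_submatrix,
          sum_mulVec, dotProduct_sum]

lemma PosSemidef.trace_mul_le_card_mul_trace_partialTraceRight
    {F M : Matrix (m × n) (m × n) 𝕜} (hF : F.PosSemidef) (hM : M.PosSemidef) :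
    (F * M).trace ≤ Fintype.card n * (F.partialTraceRight * M.partialTraceRight).trace :=
  calc (F * M).trace
      ≤ (F * ((Fintype.card n : 𝕜) • (M.partialTraceRight ⊗ₖ (1 : Matrix n n 𝕜)))).trace :=
        hF.trace_mul_le_trace_mul_of_le hM.le_card_smul_partialTraceRight_kronecker_one
    _ = _ := by rw [Matrix.mul_smul, trace_smul, trace_mul_kronecker_one, smul_eq_mul]

end Matrix

section GuessingProbability

variable {𝕜 m n X : Type*} [RCLike 𝕜] [Fintype n] [DecidableEq n] [Fintype X]

def successProb (p : X → ℝ) (ρ F : X → Matrix n n 𝕜) : ℝ :=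
  ∑ x, p x * RCLike.re (F x * ρ x).trace

def successProbs (p : X → ℝ) (ρ : X → Matrix n n 𝕜) : Set ℝ :=
  {r | ∃ F : X → Matrix n n 𝕜, (∀ x, (F x).PosSemidef) ∧ ∑ x, F x = 1 ∧ r = successProb p ρ F}

/-- `P_guess(X|E)` of the cq-state `∑ x, p x • |x⟩⟨x| ⊗ ρ x`. -/
noncomputable def guessProb (p : X → ℝ) (ρ : X → Matrix n n 𝕜) : ℝ :=
  sSup (successProbs p ρ)

variable {p : X → ℝ}

lemma successProb_le_sum_mul_re_trace (hp : ∀ x, 0 ≤ p x) {ρ F : X → Matrix n n 𝕜}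
    (hρ : ∀ x, (ρ x).PosSemidef) (hF : ∀ x, (F x).PosSemidef) (hsum : ∑ x, F x = 1) :
    successProb p ρ F ≤ ∑ x, p x * RCLike.re (ρ x).trace := by
  have hF_le_one (x : X) : F x ≤ 1 :=
    hsum ▸ Finset.single_le_sum (fun y _ => (hF y).nonneg) (Finset.mem_univ x)
  exact Finset.sum_le_sum fun x _ => mul_le_mul_of_nonneg_left
    (RCLike.re_le_re ((hρ x).trace_mul_le_trace_of_le_one (hF_le_one x))) (hp x)

lemma bddAbove_successProbs (hp : ∀ x, 0 ≤ p x) {ρ : X → Matrix n n 𝕜}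
    (hρ : ∀ x, (ρ x).PosSemidef) : BddAbove (successProbs p ρ) := by
  refine ⟨∑ x, p x * RCLike.re (ρ x).trace, ?_⟩
  rintro _ ⟨F, hF, hsum, rfl⟩
  exact successProb_le_sum_mul_re_trace hp hρ hF hsum

lemma mul_re_trace_mem_successProbs [DecidableEq X] (ρ : X → Matrix n n 𝕜) (x₀ : X) :
    p x₀ * RCLike.re (ρ x₀).trace ∈ successProbs p ρ := by
  refine ⟨Pi.single x₀ 1, fun x => ?_, Fintype.sum_pi_single' _ _, ?_⟩
  · rcases eq_or_ne x x₀ with rfl | h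
    · simpa using PosSemidef.one
    · simpa [h] using PosSemidef.zero
  · rw [successProb, Fintype.sum_eq_single x₀ fun x h => by simp [h]]
    simp

lemma guessProb_pos (hp : ∀ x, 0 ≤ p x) (hp1 : ∑ x, p x = 1) {ρ : X → Matrix n n 𝕜}
    (hρ : ∀ x, (ρ x).PosSemidef) (hρtr : ∀ x, (ρ x).trace = 1) : 0 < guessProb p ρ := by
  classical
  obtain ⟨x₀, -, hx₀⟩ :=
    Finset.exists_lt_of_sum_lt (s := .univ) (f := 0) (g := p) (by simp [hp1])
  refine hx₀.trans_le (le_csSup (bddAbove_successProbs hp hρ) ?_)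
  simpa [hρtr] using mul_re_trace_mem_successProbs ρ x₀

variable [Fintype m]

lemma successProb_le_card_sq_mul_successProb_partialTraceRight [Nonempty n]
    (hp : ∀ x, 0 ≤ p x) {ρ F : X → Matrix (m × n) (m × n) 𝕜}
    (hρ : ∀ x, (ρ x).PosSemidef) (hF : ∀ x, (F x).PosSemidef) :
    successProb p ρ F ≤ Fintype.card n ^ 2 * successProb p (fun x => (ρ x).partialTraceRight)
      (fun x => (Fintype.card n : 𝕜)⁻¹ • (F x).partialTraceRight) := by
  rw [successProb, successProb, Finset.mul_sum]
  refine Finset.sum_le_sum fun x _ => ?_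
  have key := RCLike.re_le_re ((hF x).trace_mul_le_card_mul_trace_partialTraceRight (hρ x))
  rw [← RCLike.ofReal_natCast (K := 𝕜), RCLike.re_ofReal_mul] at key
  rw [Matrix.smul_mul, trace_smul, smul_eq_mul, ← RCLike.ofReal_natCast (K := 𝕜),
    ← RCLike.ofReal_inv, RCLike.re_ofReal_mul]
  calc p x * RCLike.re (F x * ρ x).trace
      ≤ p x * (Fintype.card n *
          RCLike.re ((F x).partialTraceRight * (ρ x).partialTraceRight).trace) :=
        mul_le_mul_of_nonneg_left key (hp x)
    _ = _ := by field_simp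

lemma guessProb_le_card_sq_mul_guessProb_partialTraceRight [DecidableEq m] [Nonempty X]
    [Nonempty n] (hp : ∀ x, 0 ≤ p x) {ρ : X → Matrix (m × n) (m × n) 𝕜}
    (hρ : ∀ x, (ρ x).PosSemidef) :
    guessProb p ρ ≤ Fintype.card n ^ 2 * guessProb p fun x => (ρ x).partialTraceRight := by
  classical
  refine csSup_le ⟨_, mul_re_trace_mem_successProbs ρ (Classical.arbitrary X)⟩ ?_
  rintro _ ⟨F, hF, hsum, rfl⟩
  have hG : ∑ x, (Fintype.card n : 𝕜)⁻¹ • (F x).partialTraceRight = 1 := by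
    rw [← Finset.smul_sum, ← partialTraceRight_sum, hsum, partialTraceRight_one, smul_smul,
      inv_mul_cancel₀ (Nat.cast_ne_zero.mpr Fintype.card_ne_zero), one_smul]
  have hG_mem : successProb p (fun x => (ρ x).partialTraceRight)
      (fun x => (Fintype.card n : 𝕜)⁻¹ • (F x).partialTraceRight) ∈
        successProbs p fun x => (ρ x).partialTraceRight :=
    ⟨_, fun x => (hF x).partialTraceRight.smul (inv_nonneg.mpr (Nat.cast_nonneg _)), hG, rfl⟩
  refine (successProb_le_card_sq_mul_successProb_partialTraceRight hp hρ hF).trans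
    (mul_le_mul_of_nonneg_left ?_ (by positivity))
  exact le_csSup (bddAbove_successProbs hp fun x => (hρ x).partialTraceRight) hG_mem

end GuessingProbability

/-- min-entropy leakage chain rule, cq version, unsmoothed:
for a state ρ_XBC classical on X with dim(H_C) = 2^ℓ, and
H_min(X|·) = −log₂ of the optimal guessing probability over POVMs,
H_min(X|BC) ≥ H_min(X|B) − 2ℓ. -/
theorem stmt_7 {X B C : Type} [Fintype X] [Fintype B] [Fintype C]
    [DecidableEq B] [DecidableEq C]
    (p : X → ℝ) (hp : ∀ x, 0 ≤ p x) (hp1 : ∑ x, p x = 1)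
    (ρ : X → Matrix (B × C) (B × C) ℂ)
    (hρ : ∀ x, (ρ x).PosSemidef) (hρtr : ∀ x, (ρ x).trace = 1)
    (ℓ : ℕ) (hC : Fintype.card C = 2 ^ ℓ) :
    -(Real.logb 2 (sSup {r : ℝ | ∃ F : X → Matrix (B × C) (B × C) ℂ,
        (∀ x, (F x).PosSemidef) ∧ (∑ x, F x = 1) ∧
        r = ∑ x, p x * ((F x * ρ x).trace).re})) ≥
      -(Real.logb 2 (sSup {r : ℝ | ∃ F : X → Matrix B B ℂ,
        (∀ x, (F x).PosSemidef) ∧ (∑ x, F x = 1) ∧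
        r = ∑ x, p x *
          ((F x * (Matrix.of fun b b' => ∑ c, ρ x (b, c) (b', c))).trace).re})) -
        2 * (ℓ : ℝ) := by
  change -Real.logb 2 (guessProb p ρ) ≥
    -Real.logb 2 (guessProb p fun x => (ρ x).partialTraceRight) - 2 * ℓ
  have : Nonempty C := Fintype.card_pos_iff.mp (by rw [hC]; positivity)
  have : Nonempty X := Finset.univ_nonempty_iff.mp
    (Finset.nonempty_of_sum_ne_zero (by rw [hp1]; exact one_ne_zero))
  have hBC := guessProb_pos hp hp1 hρ hρtr
  have hle := guessProb_le_card_sq_mul_guessProb_partialTraceRight hp hρ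
  have hB : 0 < guessProb p fun x => (ρ x).partialTraceRight :=
    pos_of_mul_pos_right (hBC.trans_le hle) (by positivity)
  have hcard : Real.logb 2 ((Fintype.card C : ℝ) ^ 2) = 2 * ℓ := by
    rw [hC, Nat.cast_pow, Nat.cast_ofNat, ← pow_mul, Real.logb_pow,
      Real.logb_self_eq_one one_lt_two]
    push_cast
    ring
  have hlog := Real.logb_le_logb_of_le one_lt_two hBC hle
  rw [Real.logb_mul (by positivity) hB.ne', hcard] at hlog
  linarith
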